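/- For every β < 1/2 there exists a constant c = c(β) > 0 such that for every k ∈ ℤ₀ and every function f : ℤ₀² → ℂ one has ( Σ_{p,q∈ℤ₀, p+q=k} |f(p,q)| )² ≤ c · (k²)^{2β−1} · Σ_{p,q∈ℤ₀, p+q=k} (p² + q²)^{3/2−2β} |f(p,q)|², as an inequality in [0,∞]. -/

import Mathlib

open scoped BigOperators ENNReal NNReal Real
open MeasureTheory Filter

noncomputable section

/-- The nonzero integers `ℤ₀`. -/
abbrev Z0 : Type := {k : ℤ // k ≠ 0}

/-- A Fock kernel family in Fourier variables: for each `n` a kernel on `ℤ₀ⁿ`. -/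
abbrev FockV : Type := (n : ℕ) → (Fin n → Z0) → ℂ

/-- Symmetry of all kernels under permutation of the arguments. -/
def IsSymmFock (φ : FockV) : Prop :=
  ∀ (n : ℕ) (σ : Equiv.Perm (Fin n)) (k : Fin n → Z0), φ n (fun i => k (σ i)) = φ n k

/-- `energy k = |2πk₁|² + ⋯ + |2πkₙ|²`. -/
def energy {n : ℕ} (k : Fin n → Z0) : ℝ :=
  ∑ i, (2 * Real.pi * ((k i).1 : ℝ)) ^ 2

/-- Squared weighted norm `‖v(𝒩)(−ℒ₀)^γ φ‖²`, valued in `[0,∞]`. -/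
def wnormSq (v : ℕ → ℝ) (γ : ℝ) (φ : FockV) : ℝ≥0∞ :=
  ∑' (n : ℕ) (k : Fin n → Z0),
    (Nat.factorial n : ℝ≥0∞) * ENNReal.ofReal ((v n) ^ 2) *
      ENNReal.ofReal (energy k ^ (2 * γ)) * ((‖φ n k‖₊ : ℝ≥0∞) ^ 2)

/-- Weighted norm `‖v(𝒩)(−ℒ₀)^γ φ‖`, valued in `[0,∞]`. -/
def wnorm (v : ℕ → ℝ) (γ : ℝ) (φ : FockV) : ℝ≥0∞ :=
  wnormSq v γ φ ^ (1/2 : ℝ)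

/-- Fourier cutoff indicator `1_{|j| ≤ m}` for `m ∈ ℕ∪{∞}`. -/
def indm (m : ℕ∞) (j : ℤ) : ℂ :=
  if (j.natAbs : ℕ∞) ≤ m then 1 else 0

/-- Unsymmetrized kernel of `𝒢ᵐ₊φ`. -/
def gplusKer (m : ℕ∞) (φ : FockV) : FockV := fun n k =>
  match n, k with
  | 0, _ => 0
  | 1, _ => 0
  | (n+2), k =>
    if h : (k 0).1 + (k 1).1 ≠ 0 then
      (-(n+1) : ℂ) * indm m (k 0).1 * indm m (k 1).1 * indm m ((k 0).1 + (k 1).1) *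
        (2 * Real.pi * Complex.I * (((k 0).1 + (k 1).1 : ℤ) : ℂ)) *
        φ (n+1) (Fin.cons ⟨(k 0).1 + (k 1).1, h⟩ (fun i => k i.succ.succ))
    else 0

/-- Summand (in `p`) of the series defining the kernel of `𝒢ᵐ₋φ`. -/
def gminusTerm (m : ℕ∞) (φ : FockV) (n : ℕ) (k : Fin (n+1) → Z0) (p : Z0) : ℂ :=
  if h : (k 0).1 - p.1 ≠ 0 then
    indm m p.1 * indm m ((k 0).1 - p.1) *
      φ (n+2) (Fin.cons p (Fin.cons ⟨(k 0).1 - p.1, h⟩ (fun i => k i.succ)))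
  else 0

/-- Unsymmetrized kernel of `𝒢ᵐ₋φ`. -/
def gminusKer (m : ℕ∞) (φ : FockV) : FockV := fun n k =>
  match n, k with
  | 0, _ => 0
  | (n+1), k =>
    -(2 * Real.pi * Complex.I * ((k 0).1 : ℂ)) * ((n+1 : ℕ) : ℂ) * ((n+2 : ℕ) : ℂ) *
      indm m (k 0).1 * ∑' p : Z0, gminusTerm m φ n k p

/-- Symmetrization of a kernel family. -/
def symKer (ψ : FockV) : FockV := fun n k =>
  (Nat.factorial n : ℂ)⁻¹ * ∑ σ : Equiv.Perm (Fin n), ψ n (fun i => k (σ i))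

def Gplus (m : ℕ∞) (φ : FockV) : FockV := symKer (gplusKer m φ)
def Gminus (m : ℕ∞) (φ : FockV) : FockV := symKer (gminusKer m φ)
def Gfull (m : ℕ∞) (φ : FockV) : FockV := Gplus m φ + Gminus m φ

/-- Restriction of a kernel family to frequencies `max_i |k_i| ≥ N n`. -/
def cutAbove (N : ℕ → ℝ) (ψ : FockV) : FockV := fun n k =>
  haveI := Classical.propDecidable (∃ i : Fin n, N n ≤ ((k i).1.natAbs : ℝ))
  if ∃ i : Fin n, N n ≤ ((k i).1.natAbs : ℝ) then ψ n k else 0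

/-- `𝒢^{m,≻}` with cutoff `N`. -/
def Gsucc (m : ℕ∞) (N : ℕ → ℝ) (φ : FockV) : FockV := cutAbove N (Gfull m φ)
/-- `𝒢^{m,≺} := 𝒢ᵐ − 𝒢^{m,≻}`. -/
def Gprec (m : ℕ∞) (N : ℕ → ℝ) (φ : FockV) : FockV := Gfull m φ - Gsucc m N φ

/-- The cutoff `Nₙ = L(1+n)³`. -/
def cutN (L : ℝ) : ℕ → ℝ := fun n => L * (1 + n : ℝ) ^ 3

/-- `ℒ₀`, multiplying the `n`-th kernel by `−(|2πk₁|²+⋯+|2πkₙ|²)`. -/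
def L0op (φ : FockV) : FockV := fun n k => ((-(energy k) : ℝ) : ℂ) * φ n k

/-- `(−ℒ₀)^γ`, multiplying the `n`-th kernel by `(|2πk₁|²+⋯+|2πkₙ|²)^γ`. -/
def L0pow (γ : ℝ) (φ : FockV) : FockV := fun n k => ((energy k ^ γ : ℝ) : ℂ) * φ n k

/-- The Galerkin generator `ℒᵐ = ℒ₀ + 𝒢ᵐ`. -/
def Lm (m : ℕ∞) (φ : FockV) : FockV := L0op φ + Gfull m φ

/-- The remainder `φ♯ = φ − (−ℒ₀)^{−1}𝒢^{m,≻}φ` (cutoff `Nₙ = L(1+n)³`). -/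
def sharpOf (m : ℕ∞) (L : ℝ) (φ : FockV) : FockV :=
  φ - L0pow (-1) (Gsucc m (cutN L) φ)

/-- The generator on controlled functions: `ℒφ := ℒ₀φ♯ + 𝒢^≺φ`. -/
def Lgen (m : ℕ∞) (L : ℝ) (φ : FockV) : FockV :=
  L0op (sharpOf m L φ) + Gprec m (cutN L) φ

/-- Polynomial weight `n ↦ (1+n)^β`. -/
def pw (β : ℝ) : ℕ → ℝ := fun n => (1 + n : ℝ) ^ β

/-- The constant weight `1`. -/
def wone : ℕ → ℝ := fun _ => 1

/-- `w` is a weight with admissible constant `W`: `w(n) ≤ W·w(n±1)`. -/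
def IsWeightBound (w : ℕ → ℝ) (W : ℝ) : Prop :=
  (∀ n, 0 < w n) ∧ (∀ n, w n ≤ W * w (n+1)) ∧ (∀ n, w (n+1) ≤ W * w n)

/-- "The controlled fixed-point construction applies": the map
`ψ ↦ (−ℒ₀)^{−1}𝒢^{m,≻}ψ` is a `1/2`-contraction for the norm `‖w(𝒩)(−ℒ₀)^γ·‖`. -/
def FixedPointOK (m : ℕ∞) (w : ℕ → ℝ) (γ L : ℝ) : Prop :=
  ∀ ψ : FockV, IsSymmFock ψ →
    wnorm w γ (L0pow (-1) (Gsucc m (cutN L) ψ)) ≤ 2⁻¹ * wnorm w γ ψ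

/-- The domain `𝒟_w(ℒ)` (with cutoff `Nₙ = L(1+n)³`). -/
def InDomainW (w : ℕ → ℝ) (L : ℝ) (φ : FockV) : Prop :=
  IsSymmFock φ ∧ wnorm w (1/2) φ ≠ ⊤ ∧
    wnorm w 1 (sharpOf ⊤ L φ) ≠ ⊤ ∧
    wnorm (fun n => w n * pw (9/2) n) (1/2) (sharpOf ⊤ L φ) ≠ ⊤

def polyNormSq (β κ : ℝ) (φ : FockV) : ℝ≥0∞ := wnormSq (pw β) κ φ
def polyNorm (β κ : ℝ) (φ : FockV) : ℝ≥0∞ := wnorm (pw β) κ φ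

/-- A smooth solution of the Galerkin backward equation `∂ₜφ = ℒᵐφ` on `[0,∞)`:
symmetric, locally bounded in every norm `‖(1+𝒩)^β(−ℒ₀)^κ·‖`, continuously
differentiable with respect to each of these norms, with derivative `ℒᵐφ`. -/
def GalerkinSol (m : ℕ∞) (φ : ℝ → FockV) : Prop :=
  (∀ t, 0 ≤ t → IsSymmFock (φ t)) ∧
  (∀ β κ : ℝ, 0 ≤ β → 0 ≤ κ → ∀ T : ℝ, 0 < T → ∃ B : ℝ,
      ∀ t ∈ Set.Icc (0:ℝ) T, polyNorm β κ (φ t) ≤ ENNReal.ofReal B) ∧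
  (∀ β κ : ℝ, 0 ≤ β → 0 ≤ κ → ∀ s : ℝ, 0 ≤ s →
      Tendsto (fun t => polyNorm β κ (φ t - φ s)) (nhdsWithin s (Set.Ici 0)) (nhds 0)) ∧
  (∀ β κ : ℝ, 0 ≤ β → 0 ≤ κ → ∀ s : ℝ, 0 ≤ s →
      Tendsto (fun t => polyNorm β κ ((t - s)⁻¹ • (φ t - φ s) - Lm m (φ s)))
        (nhdsWithin s (Set.Ici 0 \ {s})) (nhds 0)) ∧
  (∀ β κ : ℝ, 0 ≤ β → 0 ≤ κ → ∀ s : ℝ, 0 ≤ s →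
      Tendsto (fun t => polyNorm β κ (Lm m (φ t) - Lm m (φ s)))
        (nhdsWithin s (Set.Ici 0)) (nhds 0))

/-- A solution of the backward equation `∂ₜφ = ℒφ` on `[0,∞)` taking values in the
domain `𝒟(ℒ)`, continuously differentiable in the norm of `ΓL²`. -/
def BackwardSol (L : ℝ) (ψ : ℝ → FockV) : Prop :=
  (∀ t, 0 ≤ t → InDomainW wone L (ψ t)) ∧
  (∀ s, 0 ≤ s →
      Tendsto (fun t => wnorm wone 0 ((t - s)⁻¹ • (ψ t - ψ s) - Lgen ⊤ L (ψ s)))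
        (nhdsWithin s (Set.Ici 0 \ {s})) (nhds 0)) ∧
  (∀ s, 0 ≤ s →
      Tendsto (fun t => wnorm wone 0 (Lgen ⊤ L (ψ t) - Lgen ⊤ L (ψ s)))
        (nhdsWithin s (Set.Ici 0)) (nhds 0))

/-- The `L²(μ)` pairing `⟨φ,ψ⟩ = Σ_n n! Σ_k conj(φ̂ₙ(k))·ψ̂ₙ(k)`. -/
def pairing (φ ψ : FockV) : ℂ :=
  ∑' x : (Σ n : ℕ, Fin n → Z0),
    (Nat.factorial x.1 : ℂ) * (starRingEnd ℂ) (φ x.1 x.2) * ψ x.1 x.2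

/-- Absolute convergence of the pairing `⟨φ,ψ⟩`. -/
def PairSummable (φ ψ : FockV) : Prop :=
  Summable (fun x : (Σ n : ℕ, Fin n → Z0) =>
    (Nat.factorial x.1 : ℝ) * ‖φ x.1 x.2 * ψ x.1 x.2‖)

end

/-! With the weight `w(p, q) = (p² + q²)^s`, `s = 3/2 - 2β > 1/2`, weighted Cauchy–Schwarz reduces
the claim to `∑_{p+q=k} (p² + q²)^(-s) ≲ |k|^(1-2s)`. On the line `p + q = k` one of `|p|, |q|` is
at least `|k| / 2`, so this sum is at most `4 ∑_{m ≥ |k|/2} m^(-2s)`, and the integral test bounds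
that tail by a multiple of `|k|^(1-2s)`. -/

namespace ENNReal

theorem tsum_sq_le_tsum_inv_mul_tsum_mul_sq {ι : Type*} (w a : ι → ℝ≥0∞) (hw₀ : ∀ i, w i ≠ 0)
    (hw : ∀ i, w i ≠ ∞) :
    (∑' i, a i) ^ 2 ≤ (∑' i, (w i)⁻¹) * ∑' i, w i * a i ^ 2 := by
  have hsq : ∀ x : ℝ≥0∞, (x ^ (2⁻¹ : ℝ)) ^ 2 = x := fun x => by
    rw [← rpow_natCast, ← rpow_mul]; norm_num
  suffices h : ∑' i, a i ≤ (∑' i, (w i)⁻¹) ^ (2⁻¹ : ℝ) * (∑' i, w i * a i ^ 2) ^ (2⁻¹ : ℝ) by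
    calc (∑' i, a i) ^ 2 ≤ _ := pow_le_pow_left₀ zero_le h 2
      _ = _ := by rw [mul_pow, hsq, hsq]
  refine tsum_le_of_sum_le' zero_le fun s => ?_
  have hcancel : ∀ i, (w i)⁻¹ * (w i * a i) = a i := fun i => by
    rw [← mul_assoc, ENNReal.inv_mul_cancel (hw₀ i) (hw i), one_mul]
  have hcancel_sq : ∀ i, (w i)⁻¹ * (w i * a i) ^ (2 : ℝ) = w i * a i ^ 2 := fun i => by
    rw [rpow_two, mul_pow, ← mul_assoc, sq, ← mul_assoc, ENNReal.inv_mul_cancel (hw₀ i) (hw i),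
      one_mul]
  calc ∑ i ∈ s, a i = ∑ i ∈ s, (w i)⁻¹ * (w i * a i) := by simp only [hcancel]
    _ ≤ (∑ i ∈ s, (w i)⁻¹) ^ (1 - (2 : ℝ)⁻¹) *
          (∑ i ∈ s, (w i)⁻¹ * (w i * a i) ^ (2 : ℝ)) ^ (2 : ℝ)⁻¹ :=
      inner_le_weight_mul_Lp_of_nonneg s one_le_two _ _
    _ ≤ _ := by
      rw [show (1 : ℝ) - 2⁻¹ = 2⁻¹ by norm_num]
      simp only [hcancel_sq]
      gcongr <;> exact ENNReal.sum_le_tsum s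

theorem tsum_int_natAbs_le (G : ℕ → ℝ≥0∞) : ∑' n : ℤ, G n.natAbs ≤ 2 * ∑' m, G m :=
  calc ∑' n : ℤ, G n.natAbs ≤ ∑' n : ℤ, G n.natAbs + G (0 : ℤ).natAbs := le_self_add
    _ = ∑' m : ℕ, (G m + G m) := by rw [← tsum_nat_add_neg ENNReal.summable]; simp
    _ = 2 * ∑' m, G m := by rw [ENNReal.tsum_add, two_mul]

end ENNReal

theorem Real.tsum_rpow_neg_nat_add_le {a : ℝ} (ha : 1 < a) {N : ℕ} (hN : 0 < N) :
    ∑' n : ℕ, ((n + N + 1 : ℕ) : ℝ) ^ (-a) ≤ (N : ℝ) ^ (1 - a) / (a - 1) := by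
  have hN' : (0 : ℝ) < N := Nat.cast_pos.2 hN
  have hint := integral_Ioi_rpow_of_lt (neg_lt_neg ha) hN'
  rw [show -a + 1 = 1 - a by ring, neg_div, ← div_neg, neg_sub] at hint
  rw [← hint]
  refine AntitoneOn.tsum_comp_add_le_integral N ?_ (integrableOn_Ioi_rpow_of_lt (neg_lt_neg ha) hN')
    fun t ht => Real.rpow_nonneg (hN'.trans ht).le _
  exact (Real.antitoneOn_rpow_Ioi_of_exponent_nonpos (by linarith)).mono
    fun t ht => hN'.trans_le ht

theorem Real.tsum_indicator_Ici_rpow_neg_le {a : ℝ} (ha : 1 < a) {M : ℕ} (hM : 0 < M) :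
    ∑' m : ℕ, (Set.Ici M).indicator (fun m : ℕ => (m : ℝ) ^ (-a)) m ≤
      (1 + (a - 1)⁻¹) * (M : ℝ) ^ (1 - a) := by
  set F := (Set.Ici M).indicator (fun m : ℕ => (m : ℝ) ^ (-a))
  have hF : Summable F := (Real.summable_nat_rpow.2 (neg_lt_neg ha)).indicator _
  have hhead : ∑ m ∈ Finset.range (M + 1), F m = (M : ℝ) ^ (-a) := by
    rw [Finset.sum_range_succ, Finset.sum_eq_zero fun m hm => Set.indicator_of_notMem
      (Set.notMem_Ici.2 (Finset.mem_range.1 hm)) _, zero_add]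
    exact Set.indicator_of_mem Set.self_mem_Ici _
  have htail : ∑' n : ℕ, F (n + (M + 1)) = ∑' n : ℕ, ((n + M + 1 : ℕ) : ℝ) ^ (-a) :=
    tsum_congr fun n => Set.indicator_of_mem (Set.mem_Ici.2 (by omega)) _
  have hpow : (M : ℝ) ^ (-a) ≤ (M : ℝ) ^ (1 - a) :=
    Real.rpow_le_rpow_of_exponent_le (Nat.one_le_cast.2 hM) (by linarith)
  rw [← hF.sum_add_tsum_nat_add (M + 1), hhead, htail, add_mul, one_mul, inv_mul_eq_div]
  exact add_le_add hpow (Real.tsum_rpow_neg_nat_add_le ha hM)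

theorem natAbs_rpow_eq_sq_rpow (k : ℤ) (t : ℝ) :
    (k.natAbs : ℝ) ^ (2 * t) = ((k : ℝ) ^ 2) ^ t := by
  rw [Nat.cast_natAbs, Int.cast_abs, ← sq_abs, ← Real.rpow_natCast, ← Real.rpow_mul (abs_nonneg _)]
  norm_num

theorem inv_ofReal_rpow_sq_add_sq_le {p : ℤ} (hp : p ≠ 0) (q : ℤ) {s : ℝ} (hs : 0 ≤ s) :
    (ENNReal.ofReal (((p : ℝ) ^ 2 + (q : ℝ) ^ 2) ^ s))⁻¹ ≤
      ENNReal.ofReal ((p.natAbs : ℝ) ^ (-(2 * s))) := by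
  have hp2 : 0 < (p : ℝ) ^ 2 := by positivity
  have hpq : 0 < (p : ℝ) ^ 2 + (q : ℝ) ^ 2 := by positivity
  rw [← ENNReal.ofReal_inv_of_pos (by positivity), ← Real.rpow_neg hpq.le, ← mul_neg,
    natAbs_rpow_eq_sq_rpow]
  exact ENNReal.ofReal_le_ofReal <|
    Real.rpow_le_rpow_of_nonpos hp2 (le_add_of_nonneg_right (sq_nonneg _)) (by linarith)

abbrev PairsSummingTo (k : ℤ) : Type := {pq : Z0 × Z0 // pq.1.1 + pq.2.1 = k}

namespace PairsSummingTo

theorem fst_injective (k : ℤ) : Function.Injective fun pq : PairsSummingTo k => pq.1.1.1 := by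
  rintro ⟨⟨p, q⟩, h : p.1 + q.1 = k⟩ ⟨⟨p', q'⟩, h' : p'.1 + q'.1 = k⟩ (hp : p.1 = p'.1)
  have hq : q.1 = q'.1 := by omega
  simp only [Subtype.ext hp, Subtype.ext hq]

theorem snd_injective (k : ℤ) : Function.Injective fun pq : PairsSummingTo k => pq.1.2.1 := by
  rintro ⟨⟨p, q⟩, h : p.1 + q.1 = k⟩ ⟨⟨p', q'⟩, h' : p'.1 + q'.1 = k⟩ (hq : q.1 = q'.1)
  have hp : p.1 = p'.1 := by omega
  simp only [Subtype.ext hp, Subtype.ext hq]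

theorem tsum_inv_rpow_le {s : ℝ} (hs : 1 / 2 < s) {k : ℤ} (hk : k ≠ 0) :
    ∑' pq : PairsSummingTo k,
        (ENNReal.ofReal (((pq.1.1.1 : ℝ) ^ 2 + (pq.1.2.1 : ℝ) ^ 2) ^ s))⁻¹ ≤
      ENNReal.ofReal (4 * (1 + (2 * s - 1)⁻¹) * 2 ^ (2 * s - 1)) *
        ENNReal.ofReal (((k : ℝ) ^ 2) ^ (1 / 2 - s)) := by
  -- `M = ⌈|k| / 2⌉`
  set M := (k.natAbs + 1) / 2
  have hM₀ : 0 < M := by omega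
  set G : ℕ → ℝ≥0∞ := fun m =>
    ENNReal.ofReal ((Set.Ici M).indicator (fun m : ℕ => (m : ℝ) ^ (-(2 * s))) m)
  have hpoint : ∀ pq : PairsSummingTo k,
      (ENNReal.ofReal (((pq.1.1.1 : ℝ) ^ 2 + (pq.1.2.1 : ℝ) ^ 2) ^ s))⁻¹ ≤
        G pq.1.1.1.natAbs + G pq.1.2.1.natAbs := by
    rintro ⟨⟨⟨p, hp⟩, ⟨q, hq⟩⟩, hpq : p + q = k⟩
    rcases (by omega : M ≤ p.natAbs ∨ M ≤ q.natAbs) with h | h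
    · refine le_add_right ((inv_ofReal_rpow_sq_add_sq_le hp q (by linarith)).trans_eq ?_)
      simp only [G, Set.indicator_of_mem (Set.mem_Ici.2 h)]
    · rw [add_comm ((p : ℝ) ^ 2)]
      refine le_add_left ((inv_ofReal_rpow_sq_add_sq_le hq p (by linarith)).trans_eq ?_)
      simp only [G, Set.indicator_of_mem (Set.mem_Ici.2 h)]
  have hC : 0 < 1 + (2 * s - 1)⁻¹ := by
    have := inv_pos.2 (by linarith : 0 < 2 * s - 1); linarith
  have htail : ∑' m, G m ≤ ENNReal.ofReal ((1 + (2 * s - 1)⁻¹) * (M : ℝ) ^ (1 - 2 * s)) := by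
    rw [← ENNReal.ofReal_tsum_of_nonneg
      (Set.indicator_nonneg fun m _ => Real.rpow_nonneg (Nat.cast_nonneg m) _)
      ((Real.summable_nat_rpow.2 (by linarith)).indicator _)]
    exact ENNReal.ofReal_le_ofReal (Real.tsum_indicator_Ici_rpow_neg_le (by linarith) hM₀)
  have hMk : (M : ℝ) ^ (1 - 2 * s) ≤ 2 ^ (2 * s - 1) * ((k : ℝ) ^ 2) ^ (1 / 2 - s) := by
    have hK : (0 : ℝ) < k.natAbs / 2 := by positivity
    have hKM : (k.natAbs : ℝ) / 2 ≤ M := by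
      rw [div_le_iff₀ two_pos]; exact_mod_cast (by omega : k.natAbs ≤ M * 2)
    calc (M : ℝ) ^ (1 - 2 * s) ≤ ((k.natAbs : ℝ) / 2) ^ (1 - 2 * s) :=
          Real.rpow_le_rpow_of_nonpos hK hKM (by linarith)
      _ = 2 ^ (2 * s - 1) * ((k : ℝ) ^ 2) ^ (1 / 2 - s) := by
          rw [Real.div_rpow (Nat.cast_nonneg _) zero_le_two, div_eq_mul_inv,
            ← Real.rpow_neg zero_le_two, neg_sub, mul_comm,
            show 1 - 2 * s = 2 * (1 / 2 - s) by ring, natAbs_rpow_eq_sq_rpow]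
  calc ∑' pq : PairsSummingTo k,
        (ENNReal.ofReal (((pq.1.1.1 : ℝ) ^ 2 + (pq.1.2.1 : ℝ) ^ 2) ^ s))⁻¹
      ≤ ∑' pq : PairsSummingTo k, G pq.1.1.1.natAbs + ∑' pq : PairsSummingTo k, G pq.1.2.1.natAbs :=
        (ENNReal.tsum_le_tsum hpoint).trans_eq ENNReal.tsum_add
    _ ≤ ∑' n : ℤ, G n.natAbs + ∑' n : ℤ, G n.natAbs :=
        add_le_add (ENNReal.tsum_comp_le_tsum_of_injective (fst_injective k) _)
          (ENNReal.tsum_comp_le_tsum_of_injective (snd_injective k) _)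
    _ ≤ 4 * ∑' m, G m := by
        grw [ENNReal.tsum_int_natAbs_le, ← add_mul]; norm_num
    _ ≤ ENNReal.ofReal
          (4 * ((1 + (2 * s - 1)⁻¹) * (2 ^ (2 * s - 1) * ((k : ℝ) ^ 2) ^ (1 / 2 - s)))) := by
        grw [htail, hMk, ← ENNReal.ofReal_ofNat 4, ← ENNReal.ofReal_mul (by norm_num)]
    _ = _ := by
        rw [← ENNReal.ofReal_mul (by positivity)]
        congr 1
        ring

end PairsSummingTo

section Statements

open scoped BigOperators ENNReal NNReal Real
open MeasureTheory Filter

theorem convolution_cauchy_schwarz :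
    ∀ β : ℝ, β < 1/2 → ∃ c : ℝ, 0 < c ∧ ∀ k : Z0, ∀ f : Z0 → Z0 → ℂ,
      (∑' pq : {pq : Z0 × Z0 // pq.1.1 + pq.2.1 = k.1},
          (‖f pq.1.1 pq.1.2‖₊ : ℝ≥0∞)) ^ 2 ≤
        ENNReal.ofReal c * ENNReal.ofReal (((k.1 : ℝ)^2) ^ (2*β - 1)) *
          ∑' pq : {pq : Z0 × Z0 // pq.1.1 + pq.2.1 = k.1},
            ENNReal.ofReal (((pq.1.1.1 : ℝ)^2 + (pq.1.2.1 : ℝ)^2) ^ ((3:ℝ)/2 - 2*β)) *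
              (‖f pq.1.1 pq.1.2‖₊ : ℝ≥0∞) ^ 2 := by
  intro β hβ
  set s := (3 : ℝ) / 2 - 2 * β with hs_def
  have hs : 1 / 2 < s := by linarith
  have hC : 0 < 1 + (2 * s - 1)⁻¹ := by
    have := inv_pos.2 (by linarith : 0 < 2 * s - 1); linarith
  refine ⟨4 * (1 + (2 * s - 1)⁻¹) * 2 ^ (2 * s - 1),
    mul_pos (mul_pos four_pos hC) (Real.rpow_pos_of_pos two_pos _), fun k f => ?_⟩
  have hline := PairsSummingTo.tsum_inv_rpow_le hs k.2
  rw [show 1 / 2 - s = 2 * β - 1 by rw [hs_def]; ring] at hline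
  have hw₀ : ∀ pq : PairsSummingTo k.1,
      ENNReal.ofReal (((pq.1.1.1 : ℝ) ^ 2 + (pq.1.2.1 : ℝ) ^ 2) ^ s) ≠ 0 :=
    fun pq => (ENNReal.ofReal_pos.2 (Real.rpow_pos_of_pos (by have := pq.1.1.2; positivity) _)).ne'
  exact (ENNReal.tsum_sq_le_tsum_inv_mul_tsum_mul_sq _ _ hw₀ fun _ => ENNReal.ofReal_ne_top).trans
    (mul_le_mul_left hline _)

end Statements
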